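/- There is an absolute constant C > 0 with the following property. Let G ∈ L²(ℝ), let λ > 0, and suppose τ = (sup_{0<r<λ} (λ/r)·∫_{−r}^{r} |G(s)|² ds)^(1/2) + sup_{r>0} r^(−1/2)·∫_{−r}^{r} |G(s)| ds is finite. Then the associated radial free wave v_L satisfies the pointwise bound |v_L(x,t)| ≤ C · min{λ^(−1/2), |x|^(−1/2)} · τ for every (x,t) with |x| > |t|. -/

import Mathlib

open MeasureTheory Real Set

noncomputable section

/-- The ground state `W(x) = (1/3 + |x|^2)^(-1/2)` on `ℝ³`. -/
def W3 (x : EuclideanSpace ℝ (Fin 3)) : ℝ := (1/3 + ‖x‖^2) ^ (-(1:ℝ)/2)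

/-- The rescaled ground state `W_λ(x) = λ^(-1/2) W(x/λ)`. -/
def Wlam (lam : ℝ) (x : EuclideanSpace ℝ (Fin 3)) : ℝ := lam ^ (-(1:ℝ)/2) * W3 (lam⁻¹ • x)

/-- The Strichartz norm `‖χ_Ψ u‖_Y = (∫ (∫_{(x,t)∈Ψ} |u|^10 dx)^(1/2) dt)^(1/5)`. -/
def Ynorm (Ψ : Set (EuclideanSpace ℝ (Fin 3) × ℝ))
    (u : EuclideanSpace ℝ (Fin 3) → ℝ → ℝ) : ℝ :=
  (∫ t : ℝ, (∫ x in {x | (x, t) ∈ Ψ}, |u x t| ^ 10) ^ ((1:ℝ)/2)) ^ ((1:ℝ)/5)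

/-- The norm `‖χ_Ψ u‖_{L¹L²} = ∫ (∫_{(x,t)∈Ψ} |u|² dx)^(1/2) dt`. -/
def L1L2 (Ψ : Set (EuclideanSpace ℝ (Fin 3) × ℝ))
    (u : EuclideanSpace ℝ (Fin 3) → ℝ → ℝ) : ℝ :=
  ∫ t : ℝ, (∫ x in {x | (x, t) ∈ Ψ}, (u x t) ^ 2) ^ ((1:ℝ)/2)

/-- The channel region `Ω_{r₁,r₂} = {(x,t) : |t| + r₁ < |x| < |t| + r₂}`. -/
def channel (r₁ r₂ : ℝ) : Set (EuclideanSpace ℝ (Fin 3) × ℝ) :=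
  {p | |p.2| + r₁ < ‖p.1‖ ∧ ‖p.1‖ < |p.2| + r₂}

/-- The radial free wave with radiation profile `G` (in the negative time direction):
`v(x,t) = |x|⁻¹ ∫_{t-|x|}^{t+|x|} G(s) ds`. -/
def freeWave (G : ℝ → ℝ) (x : EuclideanSpace ℝ (Fin 3)) (t : ℝ) : ℝ :=
  ‖x‖⁻¹ * ∫ s in (t - ‖x‖)..(t + ‖x‖), G s

/-- `‖G‖_{L²(E)} = (∫_E |G|²)^(1/2)`. -/
def L2on (G : ℝ → ℝ) (E : Set ℝ) : ℝ := (∫ s in E, (G s)^2) ^ ((1:ℝ)/2)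

/-- The set whose supremum is `sup_{0<r<λ} (λ/r) ∫_{-r}^r |G(s)|² ds`. -/
def tauA (G : ℝ → ℝ) (lam : ℝ) : Set ℝ :=
  {A | ∃ r, 0 < r ∧ r < lam ∧ A = (lam / r) * ∫ s in (-r)..r, (G s)^2}

/-- The set whose supremum is `sup_{r>0} r^(-1/2) ∫_{-r}^r |G(s)| ds`. -/
def tauB (G : ℝ → ℝ) : Set ℝ :=
  {B | ∃ r, 0 < r ∧ B = (∫ s in (-r)..r, |G s|) / Real.sqrt r}

/-- `τ = (sup_{0<r<λ} (λ/r)∫_{-r}^r |G|²)^(1/2) + sup_{r>0} r^(-1/2)∫_{-r}^r |G|`. -/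
def tau (G : ℝ → ℝ) (lam : ℝ) : ℝ := Real.sqrt (sSup (tauA G lam)) + sSup (tauB G)

/-! Since `|t| < |x|`, the interval `[t - |x|, t + |x|]` lies in `[-2|x|, 2|x|]`, so
`|v_L(x,t)| ≤ |x|⁻¹ ∫_{-2|x|}^{2|x|} |G|`. If `λ ≤ 2|x|`, the `L¹` part of `τ` bounds this
by `2 τ (2|x|)^(-1/2)`. If `2|x| < λ`, Cauchy–Schwarz on `[-2|x|, 2|x|]` and the `L²` part
of `τ` bound it by `2√2 τ λ^(-1/2)`. Either way the bound is at most
`2√2 min(λ^(-1/2), |x|^(-1/2)) τ`. -/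

lemma integral_abs_le_sqrt_mul_sqrt_integral_sq {G : ℝ → ℝ} {a b : ℝ} (hab : a ≤ b)
    (hG : MemLp G 2 (volume.restrict (Ioc a b))) :
    ∫ s in a..b, |G s| ≤ √(b - a) * √(∫ s in a..b, G s ^ 2) := by
  have h := integral_mul_norm_le_Lp_mul_Lq Real.HolderConjugate.two_two
    (by simpa using hG) (memLp_const (1 : ℝ))
  simp only [norm_one, mul_one, one_pow, integral_const, Real.norm_eq_abs, smul_eq_mul,
    measureReal_restrict_apply_univ, Real.volume_real_Ioc_of_le hab, rpow_two, sq_abs] at h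
  rw [intervalIntegral.integral_of_le hab, intervalIntegral.integral_of_le hab, sqrt_eq_rpow,
    sqrt_eq_rpow, mul_comm]
  exact h

lemma MeasureTheory.MemLp.intervalIntegrable {E : Type*} [NormedAddCommGroup E] {f : ℝ → E}
    {p : ENNReal} (hf : MemLp f p) (hp : 1 ≤ p) (a b : ℝ) : IntervalIntegrable f volume a b :=
  ((hf.locallyIntegrable hp).integrableOn_isCompact isCompact_uIcc).intervalIntegrable

lemma rpow_neg_one_div_two {y : ℝ} (hy : 0 ≤ y) : y ^ (-(1:ℝ)/2) = (√y)⁻¹ := by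
  rw [neg_div, rpow_neg hy, sqrt_eq_rpow]

lemma abs_freeWave_le {G : ℝ → ℝ} {x : EuclideanSpace ℝ (Fin 3)} {t : ℝ}
    (hG : IntervalIntegrable G volume (-(2 * ‖x‖)) (2 * ‖x‖)) (hxt : |t| < ‖x‖) :
    |freeWave G x t| ≤ ‖x‖⁻¹ * ∫ s in -(2 * ‖x‖)..2 * ‖x‖, |G s| := by
  obtain ⟨hlt, hgt⟩ := abs_lt.mp hxt
  rw [freeWave, abs_mul, abs_inv, abs_norm]
  gcongr
  calc |∫ s in t - ‖x‖..t + ‖x‖, G s| ≤ ∫ s in t - ‖x‖..t + ‖x‖, |G s| :=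
        intervalIntegral.abs_integral_le_integral_abs (by linarith)
    _ ≤ ∫ s in -(2 * ‖x‖)..2 * ‖x‖, |G s| :=
        intervalIntegral.integral_mono_interval (by linarith) (by linarith) (by linarith)
          (.of_forall fun s => abs_nonneg _) hG.abs

section Profile

variable {G : ℝ → ℝ} {lam ρ : ℝ}

lemma integral_abs_le_sSup_tauB_mul_sqrt (hB : BddAbove (tauB G)) (hρ : 0 < ρ) :
    ∫ s in -ρ..ρ, |G s| ≤ sSup (tauB G) * √ρ :=
  (div_le_iff₀ (sqrt_pos.2 hρ)).1 (le_csSup hB ⟨ρ, hρ, rfl⟩)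

lemma sSup_tauB_nonneg (hB : BddAbove (tauB G)) : 0 ≤ sSup (tauB G) := by
  simpa using (intervalIntegral.integral_nonneg (by norm_num) fun s _ => abs_nonneg (G s)).trans
    (integral_abs_le_sSup_tauB_mul_sqrt hB one_pos)

lemma mul_integral_sq_le_sSup_tauA_mul (hA : BddAbove (tauA G lam)) (hρ : 0 < ρ)
    (hρlam : ρ < lam) : lam * ∫ s in -ρ..ρ, G s ^ 2 ≤ sSup (tauA G lam) * ρ := by
  have h := le_csSup hA ⟨ρ, hρ, hρlam, rfl⟩
  rwa [div_mul_eq_mul_div, div_le_iff₀ hρ] at h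

end Profile

section FreeWave

variable {G : ℝ → ℝ} {lam : ℝ} {x : EuclideanSpace ℝ (Fin 3)} {t : ℝ}

lemma abs_freeWave_le_of_le (hG : MemLp G 2 (volume : Measure ℝ)) (hB : BddAbove (tauB G))
    (hlam : 0 < lam) (hxt : |t| < ‖x‖) (hlx : lam ≤ 2 * ‖x‖) :
    |freeWave G x t| ≤ 2 * min (lam ^ (-(1:ℝ)/2)) (‖x‖ ^ (-(1:ℝ)/2)) * sSup (tauB G) := by
  have hx : 0 < ‖x‖ := (abs_nonneg t).trans_lt hxt
  calc |freeWave G x t| ≤ ‖x‖⁻¹ * ∫ s in -(2 * ‖x‖)..2 * ‖x‖, |G s| :=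
        abs_freeWave_le (hG.intervalIntegrable one_le_two _ _) hxt
    _ ≤ ‖x‖⁻¹ * (sSup (tauB G) * √(2 * ‖x‖)) := by
        gcongr
        exact integral_abs_le_sSup_tauB_mul_sqrt hB (by positivity)
    _ = 2 * (2 * ‖x‖) ^ (-(1:ℝ)/2) * sSup (tauB G) := by
        rw [rpow_neg_one_div_two (by positivity)]
        field_simp
        rw [sq_sqrt (by positivity)]
        ring
    _ ≤ 2 * min (lam ^ (-(1:ℝ)/2)) (‖x‖ ^ (-(1:ℝ)/2)) * sSup (tauB G) := by
        gcongr
        · exact sSup_tauB_nonneg hB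
        · exact le_min (rpow_le_rpow_of_nonpos hlam hlx (by norm_num))
            (rpow_le_rpow_of_nonpos hx (by linarith) (by norm_num))

lemma abs_freeWave_le_of_lt (hG : MemLp G 2 (volume : Measure ℝ)) (hA : BddAbove (tauA G lam))
    (hxt : |t| < ‖x‖) (hlx : 2 * ‖x‖ < lam) :
    |freeWave G x t| ≤
      2 * √2 * min (lam ^ (-(1:ℝ)/2)) (‖x‖ ^ (-(1:ℝ)/2)) * √(sSup (tauA G lam)) := by
  have hx : 0 < ‖x‖ := (abs_nonneg t).trans_lt hxt
  have hlam : 0 < lam := by linarith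
  set A := sSup (tauA G lam)
  have hL2 := mul_integral_sq_le_sSup_tauA_mul hA (by positivity) hlx
  rw [min_eq_left (rpow_le_rpow_of_nonpos hx (by linarith) (by norm_num))]
  calc |freeWave G x t| ≤ ‖x‖⁻¹ * ∫ s in -(2 * ‖x‖)..2 * ‖x‖, |G s| :=
        abs_freeWave_le (hG.intervalIntegrable one_le_two _ _) hxt
    _ ≤ ‖x‖⁻¹ *
          (√(2 * ‖x‖ - -(2 * ‖x‖)) * √(∫ s in -(2 * ‖x‖)..2 * ‖x‖, G s ^ 2)) := by
        gcongr
        exact integral_abs_le_sqrt_mul_sqrt_integral_sq (by linarith) (hG.restrict _)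
    _ ≤ ‖x‖⁻¹ * (√(4 * ‖x‖) * √(A * (2 * ‖x‖) / lam)) := by
        gcongr
        · linarith
        · rw [le_div_iff₀ hlam, mul_comm]
          exact hL2
    _ = 2 * √2 * lam ^ (-(1:ℝ)/2) * √A := by
        rw [rpow_neg_one_div_two hlam.le, ← sqrt_mul (by positivity),
          show 4 * ‖x‖ * (A * (2 * ‖x‖) / lam) = (2 * ‖x‖) ^ 2 * 2 * A / lam by ring,
          sqrt_div' _ hlam.le, sqrt_mul (by positivity), sqrt_mul (by positivity),
          sqrt_sq (by positivity)]
        field_simp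

end FreeWave

theorem stmt13 :
    ∃ C : ℝ, 0 < C ∧ ∀ (G : ℝ → ℝ) (lam : ℝ),
      MemLp G 2 (volume : Measure ℝ) → 0 < lam →
      BddAbove (tauA G lam) → BddAbove (tauB G) →
      ∀ (x : EuclideanSpace ℝ (Fin 3)) (t : ℝ), |t| < ‖x‖ →
        |freeWave G x t|
          ≤ C * min (lam ^ (-(1:ℝ)/2)) (‖x‖ ^ (-(1:ℝ)/2)) * tau G lam := by
  refine ⟨2 * √2, by positivity, fun G lam hG hlam hA hB x t hxt => ?_⟩
  set m := min (lam ^ (-(1:ℝ)/2)) (‖x‖ ^ (-(1:ℝ)/2))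
  have hm : 0 ≤ m := le_min (by positivity) (by positivity)
  have hB0 := sSup_tauB_nonneg hB
  rw [tau]
  rcases le_or_gt lam (2 * ‖x‖) with hlx | hlx
  · calc |freeWave G x t| ≤ 2 * m * sSup (tauB G) := abs_freeWave_le_of_le hG hB hlam hxt hlx
      _ ≤ 2 * √2 * m * (√(sSup (tauA G lam)) + sSup (tauB G)) := by
        have : 1 ≤ √2 := one_le_sqrt.2 one_le_two
        nlinarith [mul_nonneg hm hB0, mul_nonneg hm (sqrt_nonneg (sSup (tauA G lam)))]
  · calc |freeWave G x t| ≤ 2 * √2 * m * √(sSup (tauA G lam)) :=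
          abs_freeWave_le_of_lt hG hA hxt hlx
      _ ≤ 2 * √2 * m * (√(sSup (tauA G lam)) + sSup (tauB G)) := by
        gcongr
        exact le_add_of_nonneg_right hB0
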